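/- Let Z ∈ {0,1}^{N×K} be a block membership matrix with all blocks nonempty and P = max_i (ZᵀZ)_{ii} the largest block size, and let V ∈ ℝ^{K×K} be orthogonal. Then for any two rows i, j with different block assignments (Z_i ≠ Z_j), the rows of 𝒰 = Z(ZᵀZ)^{−1/2}V satisfy ‖𝒰_i − 𝒰_j‖₂ ≥ √(2/P). -/

import Mathlib

open Matrix

/-! Row `i` of `𝒰` is row `f i` of `V` scaled by `n_{f i}^{-1/2}`. Since the rows of `V` are
orthonormal, the squared distance between rows in blocks `a ≠ b` is exactly `1/n_a + 1/n_b`,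
which is at least `2/P`. -/

lemma of_ite_mul_diagonal_mul_apply {R m n : Type*} [Fintype n] [DecidableEq n]
    [NonAssocSemiring R] (f : m → n) (d : n → R) (V : Matrix n n R) (i : m) (k : n) :
    ((Matrix.of fun i k => if f i = k then (1 : R) else 0) * diagonal d * V) i k
      = d (f i) * V (f i) k := by
  simp [mul_apply, diagonal, ite_mul]

lemma sum_sq_sub_rows_of_mul_transpose_eq_one {R n : Type*} [Fintype n] [DecidableEq n]
    [CommRing R] {V : Matrix n n R} (hV : V * Vᵀ = 1) {a b : n} (hab : a ≠ b) (x y : R) :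
    ∑ k, (x * V a k - y * V b k) ^ 2 = x ^ 2 + y ^ 2 := by
  have hrows : ∀ c d, ∑ k, V c k * V d k = (1 : Matrix n n R) c d := fun c d => by
    rw [← hV, mul_apply]; rfl
  have hexpand : ∑ k, (x * V a k - y * V b k) ^ 2
      = x ^ 2 * ∑ k, V a k * V a k - 2 * x * y * ∑ k, V a k * V b k
        + y ^ 2 * ∑ k, V b k * V b k := by
    simp only [Finset.mul_sum, ← Finset.sum_sub_distrib, ← Finset.sum_add_distrib]
    exact Finset.sum_congr rfl fun k _ => by ring
  rw [hexpand, hrows, hrows, hrows, one_apply_eq, one_apply_eq, one_apply_ne hab]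
  ring

lemma two_div_le_inv_add_inv {K : Type*} [Field K] [LinearOrder K] [IsStrictOrderedRing K]
    {a b P : K} (ha : 0 < a) (hb : 0 < b) (haP : a ≤ P) (hbP : b ≤ P) :
    2 / P ≤ a⁻¹ + b⁻¹ := by
  rw [div_eq_mul_inv, two_mul]
  exact add_le_add (inv_anti₀ ha haP) (inv_anti₀ hb hbP)

theorem stmt13_general (N K : ℕ) (f : Fin N → Fin K)
    (Z : Matrix (Fin N) (Fin K) ℝ)
    (hZ : Z = Matrix.of fun i k => if f i = k then (1 : ℝ) else 0)
    (hblocks : ∀ k : Fin K, ∃ i : Fin N, f i = k)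
    (P : ℕ)
    (hP : P = Finset.univ.sup (fun k : Fin K => (Finset.univ.filter fun i => f i = k).card))
    (V : Matrix (Fin K) (Fin K) ℝ) (hV₁ : V * Vᵀ = 1)
    (𝒰 : Matrix (Fin N) (Fin K) ℝ)
    (h𝒰 : 𝒰 = Z * Matrix.diagonal
        (fun k => (Real.sqrt ((Finset.univ.filter fun i => f i = k).card : ℝ))⁻¹) * V) :
    ∀ i j : Fin N, f i ≠ f j →
      Real.sqrt (2 / (P : ℝ)) ≤ Real.sqrt (∑ k, (𝒰 i k - 𝒰 j k) ^ 2) := by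
  intro i j hij
  set n : Fin K → ℕ := fun k => (Finset.univ.filter fun i => f i = k).card
  have hn_pos : ∀ k, 0 < (n k : ℝ) := fun k => by
    obtain ⟨i, hi⟩ := hblocks k
    exact_mod_cast Finset.card_pos.mpr ⟨i, by simp [hi]⟩
  have hn_le : ∀ k, (n k : ℝ) ≤ P := fun k => by
    exact_mod_cast hP ▸ Finset.le_sup (f := n) (Finset.mem_univ k)
  have hdist : ∑ k, (𝒰 i k - 𝒰 j k) ^ 2 = (n (f i) : ℝ)⁻¹ + (n (f j) : ℝ)⁻¹ := by
    simp only [h𝒰, hZ, of_ite_mul_diagonal_mul_apply]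
    rw [sum_sq_sub_rows_of_mul_transpose_eq_one hV₁ hij, inv_pow, inv_pow,
      Real.sq_sqrt (hn_pos _).le, Real.sq_sqrt (hn_pos _).le]
  rw [hdist]
  exact Real.sqrt_le_sqrt
    (two_div_le_inv_add_inv (hn_pos _) (hn_pos _) (hn_le _) (hn_le _))

/-- For a block membership matrix `Z` with nonempty blocks, largest block size `P`, and
orthogonal `V`, rows of `𝒰 = Z (ZᵀZ)^{−1/2} V` corresponding to different blocks are at
Euclidean distance at least `√(2/P)`. -/
theorem stmt13 (N K : ℕ) (f : Fin N → Fin K)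
    (Z : Matrix (Fin N) (Fin K) ℝ)
    (hZ : Z = Matrix.of fun i k => if f i = k then (1 : ℝ) else 0)
    (hblocks : ∀ k : Fin K, ∃ i : Fin N, f i = k)
    (P : ℕ)
    (hP : P = Finset.univ.sup (fun k : Fin K => (Finset.univ.filter fun i => f i = k).card))
    (V : Matrix (Fin K) (Fin K) ℝ) (hV₁ : V * Vᵀ = 1) (hV₂ : Vᵀ * V = 1)
    (𝒰 : Matrix (Fin N) (Fin K) ℝ)
    (h𝒰 : 𝒰 = Z * Matrix.diagonal
        (fun k => (Real.sqrt ((Finset.univ.filter fun i => f i = k).card : ℝ))⁻¹) * V) :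
    ∀ i j : Fin N, f i ≠ f j →
      Real.sqrt (2 / (P : ℝ)) ≤ Real.sqrt (∑ k, (𝒰 i k - 𝒰 j k) ^ 2) :=
  stmt13_general N K f Z hZ hblocks P hP V hV₁ 𝒰 h𝒰
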